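/- Laplace transform of the additive output functional (step 1 of Theorem 3.1): For every f : I → ℝ, every u ∈ ℝ, every state ρ and every n ≥ 1, Σ_{(i_1,…,i_n)∈I^n} exp( u·Σ_{k=1}^n f(i_k) ) · tr(V_{i_n}⋯V_{i_1} ρ V_{i_1}*⋯V_{i_n}*) = tr( ρ · Φ_u^n(1) ) ≤ N_ρ · ‖Φ_u‖₂^n, where Φ_u(x) := Σ_{i∈I} e^{u f(i)} V_i* x V_i and N_ρ := ‖σ^{−1/2} ρ σ^{−1/2}‖₂. -/

import Mathlib

open Matrix MeasureTheory Finset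
open scoped ComplexOrder
noncomputable section

/-- The algebra `M_d(ℂ)` of `d × d` complex matrices. -/
abbrev Md (d : ℕ) := Matrix (Fin d) (Fin d) ℂ

/-- KMS inner product `⟨x,y⟩ = tr(s x* s y)` where `s = σ^{1/2}`. -/
def kmsInner {d : ℕ} (s x y : Md d) : ℂ := (s * xᴴ * s * y).trace

/-- KMS norm `‖x‖₂ = tr(s x* s x)^{1/2}` where `s = σ^{1/2}`. -/
def kmsNorm {d : ℕ} (s x : Md d) : ℝ := Real.sqrt ((s * xᴴ * s * x).trace.re)

/-- Operator norm of a map on `M_d(ℂ)` induced by the KMS norm. -/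
def kmsOpNorm {d : ℕ} (s : Md d) (η : Md d → Md d) : ℝ :=
  sInf {C : ℝ | 0 ≤ C ∧ ∀ x, kmsNorm s (η x) ≤ C * kmsNorm s x}

/-- Spectral (operator) norm of a matrix, i.e. the operator norm of the induced map
on Euclidean space. -/
def specNorm {d : ℕ} (x : Md d) : ℝ :=
  ‖(LinearMap.toContinuousLinearMap (Matrix.toEuclideanLin x))‖

/-- The positive square root `σ^{1/2}` of a positive definite state. -/
def sqrtm {d : ℕ} (σ : Md d) (hσ : σ.PosDef) : Md d :=
  hσ.posSemidef.1.eigenvectorUnitary.1 * diagonal ((↑) ∘ (√·) ∘ hσ.posSemidef.1.eigenvalues) *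
    (star hσ.posSemidef.1.eigenvectorUnitary : Md d)

/-- The quantum channel (Heisenberg picture) `Φ(x) = Σ_i V_i* x V_i`. -/
def channel {d : ℕ} {I : Type*} [Fintype I] (V : I → Md d) (x : Md d) : Md d :=
  ∑ i, (V i)ᴴ * x * V i

/-- The dual (Schrödinger picture) channel `Φ*(ρ) = Σ_i V_i ρ V_i*`. -/
def channelDual {d : ℕ} {I : Type*} [Fintype I] (V : I → Md d) (ρ : Md d) : Md d :=
  ∑ i, V i * ρ * (V i)ᴴ

/-- The KMS adjoint `Φ† = Γ_σ^{-1/2} ∘ Φ* ∘ Γ_σ^{1/2}` of the channel with Kraus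
operators `V`, where `s = σ^{1/2}`. -/
def channelKMSAdj {d : ℕ} {I : Type*} [Fintype I] (V : I → Md d) (s : Md d) (x : Md d) : Md d :=
  s⁻¹ * channelDual V (s * x * s) * s⁻¹

/-- Irreducibility of a completely positive map given by Kraus operators `W`:
for every nonzero `v` the span of all `W_{j_n} ⋯ W_{j_1} v` is everything. -/
def IrredKraus {d : ℕ} {J : Type*} (W : J → Md d) : Prop :=
  ∀ v : Fin d → ℂ, v ≠ 0 →
    Submodule.span ℂ {u : Fin d → ℂ | ∃ l : List J, u = ((l.map W).prod).mulVec v} = ⊤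

/-- The operator `V_{i_n} ⋯ V_{i_1}` associated with a measurement trajectory. -/
def trajOp {d : ℕ} {I : Type*} (V : I → Md d) {n : ℕ} (ω : Fin n → I) : Md d :=
  ((List.ofFn fun k => V (ω k)).reverse).prod

/-- The probability `tr(V_{i_n} ⋯ V_{i_1} ρ V_{i_1}* ⋯ V_{i_n}*)` of a trajectory. -/
def trajProb {d : ℕ} {I : Type*} (V : I → Md d) (ρ : Md d) {n : ℕ} (ω : Fin n → I) : ℝ :=
  ((trajOp V ω) * ρ * (trajOp V ω)ᴴ).trace.re

/-- The function `h(x) = 1/(√(1+x) + x/2 + 1)` from the Bernstein bound. -/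
def hfun (x : ℝ) : ℝ := (Real.sqrt (1 + x) + x / 2 + 1)⁻¹

/-- The norm `‖(Id - Φ)^{-1}|_F‖_∞` of the inverse of `Id - Φ` on
`F = {x : tr(σ x) = 0}`, with respect to the spectral norm. -/
def pseudoResNorm {d : ℕ} {I : Type*} [Fintype I] (V : I → Md d) (σ : Md d) : ℝ :=
  sInf {C : ℝ | 0 ≤ C ∧ ∀ x : Md d, (σ * x).trace = 0 →
    specNorm x ≤ C * specNorm (x - channel V x)}

/-- The deformed transition operator `Φ_u(x) = Σ_i e^{u f(i)} V_i* x V_i`. -/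
def phiU {d : ℕ} {I : Type*} [Fintype I] (V : I → Md d) (f : I → ℝ) (u : ℝ)
    (x : Md d) : Md d :=
  ∑ i, (Real.exp (u * f i) : ℂ) • ((V i)ᴴ * x * V i)

/-!
Expanding `Φ_uⁿ(1)` over trajectories gives `∑_ω e^{u ∑ₖ f(ωₖ)} W_ω* W_ω` with
`W_ω = V_{ωₙ} ⋯ V_{ω₁}`, and cyclicity of the trace turns `tr(ρ W_ω* W_ω)` into the probability
of `ω`. For the bound write `ρ = s x s` with `s = σ^{1/2}` and `x = s⁻¹ ρ s⁻¹`, so that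
`tr(ρ Φ_uⁿ(1))` is the KMS pairing of `x*` with `Φ_uⁿ(1)`. Conjugating by `r = s^{1/2}` turns the
KMS inner product into the Frobenius one, which gives Cauchy–Schwarz and `‖x*‖₂ = ‖x‖₂`; finally
`‖Φ_uⁿ(1)‖₂ ≤ ‖Φ_u‖₂ⁿ ‖1‖₂` and `‖1‖₂² = tr σ = 1`.
-/

open scoped MatrixOrder

section Frobenius

attribute [local instance] Matrix.frobeniusSeminormedAddCommGroup
  Matrix.frobeniusNormedAddCommGroup Matrix.frobeniusNormedSpace

variable {m n : Type*} [Fintype m] [Fintype n]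

theorem Matrix.trace_conjTranspose_mul_eq_inner (A B : Matrix m n ℂ) :
    (Aᴴ * B).trace = inner ℂ (WithLp.toLp 2 fun i ↦ WithLp.toLp 2 (A i) :
      PiLp 2 fun _ : m ↦ EuclideanSpace ℂ n) (WithLp.toLp 2 fun i ↦ WithLp.toLp 2 (B i)) := by
  simp only [trace, diag_apply, mul_apply, conjTranspose_apply, RCLike.star_def, mul_comm,
    PiLp.inner_apply, RCLike.inner_apply]
  exact Finset.sum_comm

theorem Matrix.re_trace_conjTranspose_mul_le (A B : Matrix m n ℂ) :
    (Aᴴ * B).trace.re ≤ ‖A‖ * ‖B‖ := by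
  rw [trace_conjTranspose_mul_eq_inner]
  exact re_inner_le_norm (𝕜 := ℂ) _ _

theorem Matrix.re_trace_conjTranspose_mul_self (A : Matrix m n ℂ) :
    (Aᴴ * A).trace.re = ‖A‖ ^ 2 := by
  rw [trace_conjTranspose_mul_eq_inner, inner_self_eq_norm_sq_to_K]
  norm_cast

variable {d : ℕ} {r : Md d}

theorem trace_mul_self_kms_eq (hr : r.IsHermitian) (x y : Md d) :
    (r * r * x * (r * r) * y).trace = ((r * xᴴ * r)ᴴ * (r * y * r)).trace := by
  simp only [conjTranspose_mul, conjTranspose_conjTranspose, hr.eq, mul_assoc]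
  rw [trace_mul_comm]
  simp only [mul_assoc]

theorem kmsNorm_mul_self (hr : r.IsHermitian) (x : Md d) : kmsNorm (r * r) x = ‖r * x * r‖ := by
  rw [kmsNorm, trace_mul_self_kms_eq hr, conjTranspose_conjTranspose,
    re_trace_conjTranspose_mul_self, Real.sqrt_sq (norm_nonneg _)]

theorem re_trace_mul_self_kms_le (hr : r.IsHermitian) (x y : Md d) :
    (r * r * x * (r * r) * y).trace.re ≤ kmsNorm (r * r) x * kmsNorm (r * r) y := by
  have hx : (r * xᴴ * r)ᴴ = r * x * r := by
    simp only [conjTranspose_mul, conjTranspose_conjTranspose, hr.eq, mul_assoc]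
  rw [trace_mul_self_kms_eq hr, kmsNorm_mul_self hr, kmsNorm_mul_self hr, ← hx,
    frobenius_norm_conjTranspose]
  exact re_trace_conjTranspose_mul_le _ _

theorem exists_kmsNorm_mul_self_bound (hr : IsUnit r.det) (hrH : r.IsHermitian) {η : Md d → Md d}
    (hη : IsLinearMap ℂ η) :
    ∃ C, 0 ≤ C ∧ ∀ x, kmsNorm (r * r) (η x) ≤ C * kmsNorm (r * r) x := by
  let T : Md d →ₗ[ℂ] Md d := LinearMap.mulLeftRight ℂ (r, r) ∘ₗ IsLinearMap.mk' η hη ∘ₗ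
    LinearMap.mulLeftRight ℂ (r⁻¹, r⁻¹)
  obtain ⟨C, hC, hT⟩ := SemilinearMapClass.bound_of_continuous T T.continuous_of_finiteDimensional
  refine ⟨C, hC.le, fun x ↦ ?_⟩
  have hTx : T (r * x * r) = r * η x * r := by
    simp [T, mul_assoc, nonsing_inv_mul_cancel_left r _ hr, mul_nonsing_inv r hr]
  simpa only [kmsNorm_mul_self hrH, hTx] using hT (r * x * r)

end Frobenius

section KMS

variable {d : ℕ} {s : Md d}

theorem Matrix.PosSemidef.exists_isHermitian_mul_self_eq (hs : s.PosSemidef) :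
    ∃ r : Md d, r.IsHermitian ∧ r * r = s :=
  ⟨CFC.sqrt s, (CFC.sqrt_nonneg s).isSelfAdjoint, CFC.sqrt_mul_sqrt_self s hs.nonneg⟩

theorem Matrix.PosDef.exists_isUnit_det_isHermitian_mul_self_eq (hs : s.PosDef) :
    ∃ r : Md d, IsUnit r.det ∧ r.IsHermitian ∧ r * r = s := by
  obtain ⟨r, hrH, rfl⟩ := hs.posSemidef.exists_isHermitian_mul_self_eq
  refine ⟨r, ?_, hrH, rfl⟩
  have hdet : IsUnit (r * r).det := (isUnit_iff_isUnit_det _).1 hs.isUnit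
  rw [det_mul] at hdet
  exact isUnit_of_mul_isUnit_left hdet

theorem re_trace_kms_le (hs : s.PosSemidef) (x y : Md d) :
    (s * x * s * y).trace.re ≤ kmsNorm s x * kmsNorm s y := by
  obtain ⟨r, hr, rfl⟩ := hs.exists_isHermitian_mul_self_eq
  exact re_trace_mul_self_kms_le hr x y

theorem exists_kmsNorm_bound (hs : s.PosDef) {η : Md d → Md d} (hη : IsLinearMap ℂ η) :
    ∃ C, 0 ≤ C ∧ ∀ x, kmsNorm s (η x) ≤ C * kmsNorm s x := by
  obtain ⟨r, hr, hrH, rfl⟩ := hs.exists_isUnit_det_isHermitian_mul_self_eq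
  exact exists_kmsNorm_mul_self_bound hr hrH hη

theorem kmsNorm_nonneg (s x : Md d) : 0 ≤ kmsNorm s x :=
  Real.sqrt_nonneg _

theorem kmsOpNorm_nonneg (η : Md d → Md d) : 0 ≤ kmsOpNorm s η :=
  Real.sInf_nonneg fun _ hC ↦ hC.1

theorem kmsNorm_apply_le_kmsOpNorm_mul {η : Md d → Md d}
    (hη : ∃ C, 0 ≤ C ∧ ∀ x, kmsNorm s (η x) ≤ C * kmsNorm s x) (x : Md d) :
    kmsNorm s (η x) ≤ kmsOpNorm s η * kmsNorm s x := by
  rcases (kmsNorm_nonneg s x).eq_or_lt with hx | hx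
  · obtain ⟨C, -, hC⟩ := hη
    simpa [← hx] using hC x
  · rw [← div_le_iff₀ hx]
    exact le_csInf hη fun C hC ↦ (div_le_iff₀ hx).2 (hC.2 x)

theorem kmsNorm_iterate_le (hs : s.PosDef) {η : Md d → Md d} (hη : IsLinearMap ℂ η) (n : ℕ)
    (x : Md d) : kmsNorm s (η^[n] x) ≤ kmsOpNorm s η ^ n * kmsNorm s x := by
  induction n with
  | zero => simp
  | succ n ih =>
    rw [Function.iterate_succ_apply', pow_succ', mul_assoc]
    exact (kmsNorm_apply_le_kmsOpNorm_mul (exists_kmsNorm_bound hs hη) _).trans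
      (mul_le_mul_of_nonneg_left ih (kmsOpNorm_nonneg η))

end KMS

section Trajectories

variable {d : ℕ} {I : Type*} (V : I → Md d)

theorem trajOp_cons {n : ℕ} (i : I) (ω : Fin n → I) :
    trajOp V (Fin.cons i ω) = trajOp V ω * V i := by
  simp [trajOp, List.ofFn_succ]

variable [Fintype I] (f : I → ℝ) (u : ℝ)

theorem isLinearMap_phiU : IsLinearMap ℂ (phiU V f u) where
  map_add x y := by simp only [phiU, mul_add, add_mul, smul_add, Finset.sum_add_distrib]
  map_smul c x := by
    simp only [phiU, Matrix.mul_smul, Matrix.smul_mul, smul_comm c, Finset.smul_sum]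

theorem phiU_iterate (n : ℕ) (x : Md d) :
    (phiU V f u)^[n] x =
      ∑ ω : Fin n → I, (Real.exp (u * ∑ k, f (ω k)) : ℂ) • ((trajOp V ω)ᴴ * x * trajOp V ω) := by
  induction n with
  | zero => simp [trajOp]
  | succ n ih =>
    rw [Function.iterate_succ_apply', ih, ← (Fin.consEquiv fun _ ↦ I).sum_comp,
      Fintype.sum_prod_type, phiU]
    refine Finset.sum_congr rfl fun i _ ↦ ?_
    rw [Finset.mul_sum, Finset.sum_mul, Finset.smul_sum]
    refine Finset.sum_congr rfl fun ω _ ↦ ?_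
    simp only [Fin.consEquiv, Equiv.coe_fn_mk, trajOp_cons, Fin.sum_univ_succ, Fin.cons_zero,
      Fin.cons_succ, mul_add, Real.exp_add, Complex.ofReal_mul, Matrix.mul_smul, Matrix.smul_mul,
      smul_smul, conjTranspose_mul, mul_assoc]

theorem sum_exp_mul_trajProb (ρ : Md d) (n : ℕ) :
    ∑ ω : Fin n → I, Real.exp (u * ∑ k, f (ω k)) * trajProb V ρ ω =
      (ρ * (phiU V f u)^[n] 1).trace.re := by
  rw [phiU_iterate, Finset.mul_sum, trace_sum, Complex.re_sum]
  refine Finset.sum_congr rfl fun ω _ ↦ ?_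
  rw [Matrix.mul_smul, trace_smul, smul_eq_mul, Complex.re_ofReal_mul, trajProb, mul_one,
    trace_mul_cycle, trace_mul_comm]

end Trajectories

section Sqrtm

variable {d : ℕ} {σ : Md d} (hσ : σ.PosDef)

theorem sqrtm_eq_sqrt : sqrtm σ hσ = CFC.sqrt σ := by
  rw [CFC.sqrt_eq_real_sqrt σ hσ.posSemidef.nonneg, cfcₙ_eq_cfc, hσ.posSemidef.1.cfc_eq]
  rfl

theorem sqrtm_mul_self : sqrtm σ hσ * sqrtm σ hσ = σ := by
  rw [sqrtm_eq_sqrt]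
  exact CFC.sqrt_mul_sqrt_self σ hσ.posSemidef.nonneg

theorem posDef_sqrtm : (sqrtm σ hσ).PosDef := by
  rw [sqrtm_eq_sqrt]
  exact (CFC.sqrt_nonneg σ).posSemidef.posDef_iff_isUnit.2
    ((CFC.isUnit_sqrt_iff σ hσ.posSemidef.nonneg).2 hσ.isUnit)

end Sqrtm

theorem laplace_transform_output_general
    {d : ℕ} {I : Type*} [Fintype I]
    (V : I → Md d)
    (σ : Md d) (hσ : σ.PosDef) (hσtr : σ.trace = 1)
    (f : I → ℝ) (u : ℝ)
    (ρ : Md d)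
    (n : ℕ) :
    (∑ ω : Fin n → I,
        Real.exp (u * ∑ k, f (ω k)) * trajProb V ρ ω =
      ((ρ * (phiU V f u)^[n] 1).trace).re) ∧
    ((ρ * (phiU V f u)^[n] 1).trace).re ≤
      kmsNorm (sqrtm σ hσ) ((sqrtm σ hσ)⁻¹ * ρ * (sqrtm σ hσ)⁻¹) *
        (kmsOpNorm (sqrtm σ hσ) (phiU V f u)) ^ n := by
  refine ⟨sum_exp_mul_trajProb V f u ρ n, ?_⟩
  set s := sqrtm σ hσ
  have hs : s.PosDef := posDef_sqrtm hσ
  have hdet : IsUnit s.det := (isUnit_iff_isUnit_det s).1 hs.isUnit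
  have hρ : s * (s⁻¹ * ρ * s⁻¹) * s = ρ := by
    rw [mul_assoc, nonsing_inv_mul_cancel_right s _ hdet, mul_nonsing_inv_cancel_left s _ hdet]
  have hone : kmsNorm s 1 = 1 := by simp [kmsNorm, s, sqrtm_mul_self, hσtr]
  calc (ρ * (phiU V f u)^[n] 1).trace.re
      = (s * (s⁻¹ * ρ * s⁻¹) * s * (phiU V f u)^[n] 1).trace.re := by rw [hρ]
    _ ≤ kmsNorm s (s⁻¹ * ρ * s⁻¹) * kmsNorm s ((phiU V f u)^[n] 1) :=
      re_trace_kms_le hs.posSemidef _ _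
    _ ≤ kmsNorm s (s⁻¹ * ρ * s⁻¹) * kmsOpNorm s (phiU V f u) ^ n := by
      gcongr
      · exact kmsNorm_nonneg _ _
      · simpa [hone] using kmsNorm_iterate_le hs (isLinearMap_phiU V f u) n 1

/-- **Laplace transform of the additive output functional** (step 1 of the proof of
Theorem 3.1): `E_ρ[e^{u Σ_k f(X_k)}] = tr(ρ Φ_u^n(1)) ≤ N_ρ ‖Φ_u‖₂^n`. -/
theorem laplace_transform_output
    {d : ℕ} (hd : 1 ≤ d) {I : Type*} [Fintype I] [Nonempty I]
    (V : I → Md d) (hV : ∑ i, (V i)ᴴ * V i = 1)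
    (σ : Md d) (hσ : σ.PosDef) (hσtr : σ.trace = 1)
    (hinv : channelDual V σ = σ)
    (f : I → ℝ) (u : ℝ)
    (ρ : Md d) (hρ : ρ.PosSemidef) (hρtr : ρ.trace = 1)
    (n : ℕ) (hn : 1 ≤ n) :
    (∑ ω : Fin n → I,
        Real.exp (u * ∑ k, f (ω k)) * trajProb V ρ ω =
      ((ρ * (phiU V f u)^[n] 1).trace).re) ∧
    ((ρ * (phiU V f u)^[n] 1).trace).re ≤
      kmsNorm (sqrtm σ hσ) ((sqrtm σ hσ)⁻¹ * ρ * (sqrtm σ hσ)⁻¹) *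
        (kmsOpNorm (sqrtm σ hσ) (phiU V f u)) ^ n :=
  laplace_transform_output_general V σ hσ hσtr f u ρ n
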